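/- (Value of the relaxed LP defining the new analytical bound) Let N ≥ 2 and let α_1,…,α_N, γ_1,…,γ_N be real numbers with α_i > 0 and α_i ≤ γ_i ≤ N·α_i for all i. Let δ = max(0, max_i (γ_i − (N−1)α_i)), and assume δ < α_i and δ ≤ (γ_i − α_i)/(N−1) for all i. Set α_i' = α_i − δ and γ_i' = γ_i − N·δ. Then the minimum of Σ_{i=1}^N Σ_{k=1}^N a_i(k)/k over all real numbers a_i(k) ≥ 0 (i, k ∈ {1,…,N}) satisfying Σ_{k=1}^N a_i(k) = α_i and Σ_{k=1}^N k·a_i(k) = γ_i for all i, together with a_1(N) = a_2(N) = ⋯ = a_N(N), is attained and equals δ + Σ_{i=1}^N [ 1/χ(γ_i'/α_i') − (γ_i'/α_i' − χ(γ_i'/α_i')) / ((1 + χ(γ_i'/α_i'))·χ(γ_i'/α_i')) ] · α_i'. -/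

import Mathlib

/-!
Write `r_i = γ'_i / α'_i ∈ [1, N - 1]` and `m_i = χ(r_i)`, an integer with `m_i ≤ r_i ≤ m_i + 1`;
the `i`-th summand of the claimed value is `((2m_i + 1) α'_i - γ'_i) / (m_i (m_i + 1))`.

Lower bound: in a feasible `a` the common last column satisfies `a_i(N) ≥ δ`, because
`γ_i - (N - 1) α_i = ∑_k (k - N + 1) a_i(k) ≤ a_i(N)`. Taking `δ` off the last column leaves a
nonnegative row of mass `α'_i` and first moment `γ'_i`, and integrating against it the chord of
`1 / x` through `m_i` and `m_i + 1`, which lies below `1 / k` at every integer `k`, gives the summand.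

Attainment: put `(m_i + 1 - r_i) α'_i` at `m_i`, `(r_i - m_i) α'_i` at `m_i + 1` and `δ` at `N`;
the chord is exact on this support, and `a_i(N) = δ` since `m_i + 1 = N` forces `r_i = m_i`.
-/

open Classical in
noncomputable def chi (x : ℝ) : ℝ :=
  if (∃ n : ℤ, x = (n : ℝ)) ∧ 2 ≤ x then x - 1 else (⌊x⌋ : ℝ)

open Finset

lemma exists_nat_chi_eq {x : ℝ} (hx : 1 ≤ x) :
    ∃ n : ℕ, 1 ≤ n ∧ chi x = n ∧ (n : ℝ) ≤ x ∧ x ≤ n + 1 := by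
  unfold chi
  split_ifs with h
  · obtain ⟨⟨k, rfl⟩, hk⟩ := h
    lift k to ℕ using (by exact_mod_cast zero_le_one.trans hx)
    have hk2 : 2 ≤ k := by exact_mod_cast hk
    refine ⟨k - 1, by omega, ?_, ?_, ?_⟩ <;> push_cast [Nat.cast_sub (by omega : 1 ≤ k)] <;> linarith
  · refine ⟨⌊x⌋₊, Nat.le_floor (by exact_mod_cast hx), ?_, Nat.floor_le (by linarith),
      (Nat.lt_floor_add_one x).le⟩
    rw [natCast_floor_eq_intCast_floor (by linarith)]

/-- `x ↦ (2m + 1 - x) / (m(m + 1))` is the chord of the convex function `x ↦ 1 / x` through `m` and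
`m + 1`, and no integer lies strictly between these two points. -/
lemma chord_le_one_div {m k : ℕ} (hm : 1 ≤ m) (hk : 1 ≤ k) :
    (2 * m + 1 - k) / (m * (m + 1) : ℝ) ≤ 1 / k := by
  have hm0 : (0 : ℝ) < m := by exact_mod_cast hm
  have hk0 : (0 : ℝ) < k := by exact_mod_cast hk
  have hfac : 0 ≤ ((k : ℝ) - m) * (k - (m + 1)) := by
    rcases le_or_gt k m with h | h
    · have h' : (k : ℝ) ≤ m := by exact_mod_cast h
      nlinarith
    · have h' : (m : ℝ) + 1 ≤ k := by exact_mod_cast h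
      nlinarith
  rw [div_le_div_iff₀ (by positivity) hk0]
  nlinarith

lemma chord_bound_le_sum_div {s : Finset ℕ} (hs : ∀ k ∈ s, 1 ≤ k) {b : ℕ → ℝ}
    (hb : ∀ k ∈ s, 0 ≤ b k) {m : ℕ} (hm : 1 ≤ m) :
    ((2 * m + 1) * ∑ k ∈ s, b k - ∑ k ∈ s, (k : ℝ) * b k) / (m * (m + 1)) ≤
      ∑ k ∈ s, b k / k := by
  rw [mul_sum, ← sum_sub_distrib, sum_div]
  refine sum_le_sum fun k hk => ?_
  calc ((2 * m + 1) * b k - k * b k) / (m * (m + 1))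
      = (2 * m + 1 - k) / (m * (m + 1) : ℝ) * b k := by ring
    _ ≤ 1 / k * b k := mul_le_mul_of_nonneg_right (chord_le_one_div hm (hs k hk)) (hb k hk)
    _ = b k / k := by ring

lemma chord_bound_add_le_sum_div {N m : ℕ} (hN : 1 ≤ N) (hm : 1 ≤ m) {a : ℕ → ℝ} {δ : ℝ}
    (ha : ∀ k ∈ Icc 1 N, 0 ≤ a k) (hδ : δ ≤ a N) :
    ((2 * m + 1) * (∑ k ∈ Icc 1 N, a k - δ) - (∑ k ∈ Icc 1 N, (k : ℝ) * a k - N * δ)) /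
        (m * (m + 1)) + δ / N ≤ ∑ k ∈ Icc 1 N, a k / k := by
  have hNmem : N ∈ Icc 1 N := mem_Icc.mpr ⟨hN, le_rfl⟩
  set b : ℕ → ℝ := fun k => a k - if k = N then δ else 0 with hb
  have hb0 : ∀ k ∈ Icc 1 N, 0 ≤ b k := fun k hk => by
    simp only [hb]
    split_ifs with h
    · subst h; linarith
    · simpa using ha k hk
  have hb_sum : ∑ k ∈ Icc 1 N, b k = ∑ k ∈ Icc 1 N, a k - δ := by
    simp [hb, sum_sub_distrib, hNmem]
  have hb_mom : ∑ k ∈ Icc 1 N, (k : ℝ) * b k = ∑ k ∈ Icc 1 N, (k : ℝ) * a k - N * δ := by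
    simp [hb, mul_sub, sum_sub_distrib, hNmem]
  have hb_obj : ∑ k ∈ Icc 1 N, b k / k = ∑ k ∈ Icc 1 N, a k / k - δ / N := by
    simp [hb, sub_div, ite_div, sum_sub_distrib, hNmem]
  have key := chord_bound_le_sum_div (fun k hk => (mem_Icc.mp hk).1) hb0 hm
  rw [hb_sum, hb_mom, hb_obj] at key
  linarith

lemma exists_row_sum_div_eq_chord_bound {N m : ℕ} (hm : 1 ≤ m) {r A δ : ℝ} (hmr : m ≤ r)
    (hrm : r ≤ m + 1) (hrN : r ≤ N - 1) (hA : 0 ≤ A) (hδ : 0 ≤ δ) :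
    ∃ b : ℕ → ℝ, (∀ k ∈ Icc 1 N, 0 ≤ b k) ∧ ∑ k ∈ Icc 1 N, b k = A + δ ∧
      ∑ k ∈ Icc 1 N, (k : ℝ) * b k = r * A + N * δ ∧ b N = δ ∧
      ∑ k ∈ Icc 1 N, b k / k = ((2 * m + 1) * A - r * A) / (m * (m + 1)) + δ / N := by
  have hmN : m + 1 ≤ N := by
    have : (m : ℝ) + 1 ≤ N := by linarith
    exact_mod_cast this
  have hm0 : (0 : ℝ) < m := by exact_mod_cast hm
  have hmem_m : m ∈ Icc 1 N := mem_Icc.mpr ⟨hm, by omega⟩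
  have hmem_m1 : m + 1 ∈ Icc 1 N := mem_Icc.mpr ⟨by omega, hmN⟩
  have hmem_N : N ∈ Icc 1 N := mem_Icc.mpr ⟨by omega, le_rfl⟩
  have hp : 0 ≤ (m + 1 - r) * A := mul_nonneg (by linarith) hA
  have hq : 0 ≤ (r - m) * A := mul_nonneg (by linarith) hA
  refine ⟨fun k => (if k = m then (m + 1 - r) * A else 0) +
    (if k = m + 1 then (r - m) * A else 0) + (if k = N then δ else 0), ?_, ?_, ?_, ?_, ?_⟩
  · intro k _
    dsimp only
    split_ifs <;> linarith
  · simp only [sum_add_distrib, sum_ite_eq', hmem_m, hmem_m1, hmem_N, if_true]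
    ring
  · simp only [mul_add, sum_add_distrib, mul_ite, mul_zero, sum_ite_eq', hmem_m, hmem_m1, hmem_N,
      if_true]
    push_cast
    ring
  · have hNm : N ≠ m := by omega
    rcases hmN.lt_or_eq with h | h
    · simp [hNm, h.ne']
    · have hrm' : r = m := by
        have : (N : ℝ) = m + 1 := by exact_mod_cast h.symm
        linarith
      simp [← h, hrm']
  · simp only [add_div, ite_div, zero_div, sum_add_distrib, sum_ite_eq', hmem_m, hmem_m1, hmem_N,
      if_true]
    push_cast
    field_simp
    ring

lemma sum_mul_sub_mul_sum_le_last {N : ℕ} (hN : 1 ≤ N) {a : ℕ → ℝ} (ha : ∀ k ∈ Icc 1 N, 0 ≤ a k) :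
    ∑ k ∈ Icc 1 N, (k : ℝ) * a k - (N - 1) * ∑ k ∈ Icc 1 N, a k ≤ a N := by
  rw [mul_sum, ← sum_sub_distrib]
  calc ∑ k ∈ Icc 1 N, ((k : ℝ) * a k - (N - 1) * a k)
      ≤ ∑ k ∈ Icc 1 N, if k = N then a k else 0 := sum_le_sum fun k hk => by
        obtain ⟨-, hkN⟩ := mem_Icc.mp hk
        split_ifs with h
        · subst h; linarith
        · have : (k : ℝ) ≤ N - 1 := by
            have : k + 1 ≤ N := by omega
            have : (k : ℝ) + 1 ≤ N := by exact_mod_cast this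
            linarith
          nlinarith [ha k hk]
    _ = a N := by rw [sum_ite_eq', if_pos (mem_Icc.mpr ⟨hN, le_rfl⟩)]

lemma one_le_div_and_div_le_sub_one {N α γ δ : ℝ} (hN : 1 < N) (hδα : δ < α)
    (hδβ : δ ≤ (γ - α) / (N - 1)) (hδγ : γ - (N - 1) * α ≤ δ) :
    1 ≤ (γ - N * δ) / (α - δ) ∧ (γ - N * δ) / (α - δ) ≤ N - 1 := by
  have hα : 0 < α - δ := by linarith
  have := (le_div_iff₀ (by linarith)).mp hδβ
  constructor
  · rw [le_div_iff₀ hα]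
    linarith
  · rw [div_le_iff₀ hα]
    linarith

lemma one_div_sub_div_mul_eq {m A G : ℝ} (hm : 0 < m) (hA : A ≠ 0) :
    (1 / m - (G / A - m) / ((1 + m) * m)) * A = ((2 * m + 1) * A - G) / (m * (m + 1)) := by
  field_simp
  ring

/-- Value of the relaxed LP defining the new analytical bound: the minimum of
`∑ i ∑ k, a i k / k` subject to the row constraints and `a 1 N = ⋯ = a N N`
is attained and equals the YAT expression. -/
theorem relaxed_lp_value (N : ℕ) (hN : 2 ≤ N) (α γ : Fin N → ℝ)
    (δ : ℝ)
    (hδ : δ = max 0 (Finset.univ.sup' (Finset.univ_nonempty_iff.mpr ⟨⟨0, by omega⟩⟩)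
        (fun i => γ i - ((N : ℝ) - 1) * α i)))
    (hδα : ∀ i, δ < α i) (hδβ : ∀ i, δ ≤ (γ i - α i) / ((N : ℝ) - 1))
    (α' γ' : Fin N → ℝ)
    (hα' : ∀ i, α' i = α i - δ) (hγ' : ∀ i, γ' i = γ i - (N : ℝ) * δ) :
    IsLeast {v : ℝ | ∃ a : Fin N → ℕ → ℝ,
        (∀ i : Fin N, ∀ k ∈ Finset.Icc 1 N, 0 ≤ a i k) ∧
        (∀ i : Fin N, ∑ k ∈ Finset.Icc 1 N, a i k = α i) ∧
        (∀ i : Fin N, ∑ k ∈ Finset.Icc 1 N, (k : ℝ) * a i k = γ i) ∧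
        (∀ i j : Fin N, a i N = a j N) ∧
        v = ∑ i : Fin N, ∑ k ∈ Finset.Icc 1 N, a i k / (k : ℝ)}
      (δ + ∑ i : Fin N, (1 / chi (γ' i / α' i) -
        (γ' i / α' i - chi (γ' i / α' i)) /
          ((1 + chi (γ' i / α' i)) * chi (γ' i / α' i))) * α' i) := by
  have hN1 : (1 : ℝ) < N := by exact_mod_cast hN
  have hδ0 : 0 ≤ δ := hδ ▸ le_max_left _ _
  have hδ_ge (i : Fin N) : γ i - (N - 1) * α i ≤ δ :=
    hδ ▸ (le_sup' (fun i => γ i - ((N : ℝ) - 1) * α i) (mem_univ i)).trans (le_max_right _ _)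
  have hα'0 (i : Fin N) : 0 < α' i := by linarith [hα' i, hδα i]
  have hr (i : Fin N) : 1 ≤ γ' i / α' i ∧ γ' i / α' i ≤ N - 1 := by
    rw [hα', hγ']
    exact one_le_div_and_div_le_sub_one hN1 (hδα i) (hδβ i) (hδ_ge i)
  choose m hm hχ hmr hrm using fun i => exists_nat_chi_eq (hr i).1
  have hterm (i : Fin N) : (1 / chi (γ' i / α' i) - (γ' i / α' i - chi (γ' i / α' i)) /
      ((1 + chi (γ' i / α' i)) * chi (γ' i / α' i))) * α' i =
        ((2 * m i + 1) * α' i - γ' i) / (m i * (m i + 1)) := by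
    rw [hχ i]
    exact one_div_sub_div_mul_eq (by exact_mod_cast hm i) (hα'0 i).ne'
  have hδ_sum : ∑ _i : Fin N, δ / N = δ := by
    rw [sum_const, card_univ, Fintype.card_fin, nsmul_eq_mul, mul_div_cancel₀ _ (by positivity)]
  rw [sum_congr rfl fun i _ => hterm i]
  constructor
  · choose b hb0 hb_sum hb_mom hb_N hb_obj using fun i =>
      exists_row_sum_div_eq_chord_bound (N := N) (hm i) (hmr i) (hrm i) (hr i).2 (hα'0 i).le hδ0
    refine ⟨b, hb0, fun i => by rw [hb_sum, hα']; ring,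
      fun i => by rw [hb_mom, div_mul_cancel₀ _ (hα'0 i).ne', hγ']; ring,
      fun i j => by rw [hb_N, hb_N], ?_⟩
    simp_rw [hb_obj, div_mul_cancel₀ _ (hα'0 _).ne']
    rw [sum_add_distrib, hδ_sum, add_comm]
  · rintro v ⟨a, ha0, ha_sum, ha_mom, ha_col, rfl⟩
    have hδa (i : Fin N) : δ ≤ a i N := hδ ▸ max_le (ha0 i N (mem_Icc.mpr ⟨by omega, le_rfl⟩))
      (sup'_le _ _ fun j _ => by
        have := sum_mul_sub_mul_sum_le_last (by omega) (ha0 j)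
        rwa [ha_sum, ha_mom, ha_col j i] at this)
    calc δ + ∑ i, ((2 * m i + 1) * α' i - γ' i) / (m i * (m i + 1))
        = ∑ i, (((2 * m i + 1) * α' i - γ' i) / (m i * (m i + 1)) + δ / N) := by
          rw [sum_add_distrib, hδ_sum, add_comm]
      _ ≤ _ := sum_le_sum fun i _ => by
          have := chord_bound_add_le_sum_div (by omega) (hm i) (ha0 i) (hδa i)
          rwa [ha_sum, ha_mom, ← hα', ← hγ'] at this
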